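/- arXiv:0906.1128 — 3 statements merged into one kernel-verified Lean document; each statement's English description precedes it below -/
import Mathlib

section
/- Let h be a homogeneous harmonic polynomial of degree d in n variables, t > 0, and f(x) = exp(−‖x‖²/(4t)) on ℝⁿ. Then h(∂/∂x_1,…,∂/∂x_n) f = (−1/(2t))^d · h(x) · f(x). -/
open MvPolynomial

/-- The partial derivative `∂/∂x_i` of a function on `ℝⁿ`. -/
noncomputable def rpd {n : ℕ} (i : Fin n) (f : (Fin n → ℝ) → ℝ) : (Fin n → ℝ) → ℝ :=
  fun x => fderiv ℝ f x (Pi.single i 1)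

/-- The constant-coefficient differential operator attached to a monomial exponent `σ`. -/
noncomputable def rmonOp {n : ℕ} (σ : Fin n →₀ ℕ) (f : (Fin n → ℝ) → ℝ) : (Fin n → ℝ) → ℝ :=
  (List.finRange n).foldr (fun i g => (rpd i)^[σ i] g) f

/-- The differential operator `P(∂/∂x_1, …, ∂/∂x_n)` attached to a polynomial `P`. -/
noncomputable def rpolyOp {n : ℕ} (P : MvPolynomial (Fin n) ℝ) (f : (Fin n → ℝ) → ℝ) :
    (Fin n → ℝ) → ℝ :=
  fun x => ∑ σ ∈ P.support, P.coeff σ * rmonOp σ f x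

/-- The Laplacian `Δ = ∑ᵢ ∂²/∂x_i²` on multivariate polynomials. -/
noncomputable def rLaplacian {n : ℕ} (P : MvPolynomial (Fin n) ℝ) : MvPolynomial (Fin n) ℝ :=
  ∑ i : Fin n, pderiv i (pderiv i P)


namespace HDG
variable {n : ℕ}

lemma pderiv_pderiv_comm (i j : Fin n) (P : MvPolynomial (Fin n) ℝ) :
    pderiv i (pderiv j P) = pderiv j (pderiv i P) := by
  by_cases hij : i = j
  · subst hij; rfl
  · induction P using MvPolynomial.induction_on with
    | C a => simp [pderiv_C]
    | add p q hp hq => simp [map_add, hp, hq]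
    | mul_X p k hp =>
      simp only [pderiv_mul, map_add, hp, pderiv_X, Pi.single_apply]
      by_cases h1 : k = i <;> by_cases h2 : k = j <;>
        simp_all [pderiv_C] <;> try ring

noncomputable def Dop (c : ℝ) (i : Fin n) (P : MvPolynomial (Fin n) ℝ) : MvPolynomial (Fin n) ℝ :=
  pderiv i P + C c * (X i * P)

lemma Dop_add (c : ℝ) (i : Fin n) (P Q : MvPolynomial (Fin n) ℝ) :
    Dop c i (P + Q) = Dop c i P + Dop c i Q := by
  simp [Dop, map_add]; ring

lemma Dop_C_mul (c a : ℝ) (i : Fin n) (P : MvPolynomial (Fin n) ℝ) :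
    Dop c i (C a * P) = C a * Dop c i P := by
  simp [Dop, pderiv_C_mul]; ring

lemma Dop_comm (c : ℝ) (i j : Fin n) (P : MvPolynomial (Fin n) ℝ) :
    Dop c i (Dop c j P) = Dop c j (Dop c i P) := by
  simp only [Dop, map_add, pderiv_C_mul, pderiv_mul, pderiv_pderiv_comm i j]
  by_cases hij : i = j
  · subst hij; ring
  · simp [pderiv_X_of_ne hij, pderiv_X_of_ne (Ne.symm hij)]
    ring

noncomputable def DmonL (c : ℝ) (l : List (Fin n)) (σ : Fin n →₀ ℕ)
    (P : MvPolynomial (Fin n) ℝ) : MvPolynomial (Fin n) ℝ :=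
  l.foldr (fun i Q => (Dop c i)^[σ i] Q) P

@[simp] lemma DmonL_nil (c : ℝ) (σ : Fin n →₀ ℕ) (P : MvPolynomial (Fin n) ℝ) :
    DmonL c [] σ P = P := rfl

lemma DmonL_cons (c : ℝ) (i : Fin n) (l : List (Fin n)) (σ : Fin n →₀ ℕ)
    (P : MvPolynomial (Fin n) ℝ) :
    DmonL c (i :: l) σ P = (Dop c i)^[σ i] (DmonL c l σ P) := rfl

lemma Dop_iterate_comm (c : ℝ) (i j : Fin n) (k : ℕ) (P : MvPolynomial (Fin n) ℝ) :
    Dop c i ((Dop c j)^[k] P) = (Dop c j)^[k] (Dop c i P) := by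
  induction k generalizing P with
  | zero => rfl
  | succ k ih => rw [Function.iterate_succ_apply, Function.iterate_succ_apply, ih, Dop_comm]

lemma Dop_DmonL_comm (c : ℝ) (i : Fin n) (l : List (Fin n)) (σ : Fin n →₀ ℕ)
    (P : MvPolynomial (Fin n) ℝ) :
    Dop c i (DmonL c l σ P) = DmonL c l σ (Dop c i P) := by
  induction l with
  | nil => rfl
  | cons j l ih => rw [DmonL_cons, DmonL_cons, Dop_iterate_comm, ih]

lemma DmonL_congr (c : ℝ) (l : List (Fin n)) {σ τ : Fin n →₀ ℕ}
    (hστ : ∀ j ∈ l, σ j = τ j) (P : MvPolynomial (Fin n) ℝ) :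
    DmonL c l σ P = DmonL c l τ P := by
  induction l with
  | nil => rfl
  | cons j l ih =>
    rw [DmonL_cons, DmonL_cons, hστ j List.mem_cons_self,
      ih fun a ha => hστ a (List.mem_cons_of_mem _ ha)]

lemma DmonL_step (c : ℝ) (i : Fin n) (l : List (Fin n)) (hl : l.Nodup) (hi : i ∈ l)
    (σ : Fin n →₀ ℕ) (P : MvPolynomial (Fin n) ℝ) :
    DmonL c l (σ + Finsupp.single i 1) P = Dop c i (DmonL c l σ P) := by
  induction l with
  | nil => simp at hi
  | cons j l ih =>
    rcases List.mem_cons.mp hi with hij | hmem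
    · subst hij
      have hnot : i ∉ l := (List.nodup_cons.mp hl).1
      rw [DmonL_cons, DmonL_cons]
      simp only [Finsupp.coe_add, Pi.add_apply, Finsupp.single_eq_same]
      rw [DmonL_congr c l (τ := σ) (fun a ha => by
        have haa : a ≠ i := fun h => hnot (h ▸ ha)
        simp [Finsupp.single_apply, Ne.symm haa]) P]
      rw [Function.iterate_succ_apply']
    · rw [DmonL_cons, DmonL_cons]
      have hji : j ≠ i := fun h => ((List.nodup_cons.mp hl).1 (h ▸ hmem))
      have h1 : ((σ + Finsupp.single i 1 : Fin n →₀ ℕ)) j = σ j := by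
        simp [Finsupp.single_apply, Ne.symm hji]
      rw [h1, ih (List.nodup_cons.mp hl).2 hmem]
      exact (Dop_iterate_comm c i j (σ j) _).symm

lemma lap_add (P Q : MvPolynomial (Fin n) ℝ) :
    rLaplacian (P + Q) = rLaplacian P + rLaplacian Q := by
  simp [rLaplacian, map_add, Finset.sum_add_distrib]

lemma lap_C_mul (a : ℝ) (P : MvPolynomial (Fin n) ℝ) :
    rLaplacian (C a * P) = C a * rLaplacian P := by
  simp [rLaplacian, pderiv_C_mul, Finset.mul_sum]

@[simp] lemma lap_zero : rLaplacian (0 : MvPolynomial (Fin n) ℝ) = 0 := by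
  simp [rLaplacian]

@[simp] lemma lapIter_zero (k : ℕ) : rLaplacian^[k] (0 : MvPolynomial (Fin n) ℝ) = 0 := by
  induction k with
  | zero => rfl
  | succ k ih => rw [Function.iterate_succ_apply, lap_zero, ih]

lemma lapIter_add (k : ℕ) (P Q : MvPolynomial (Fin n) ℝ) :
    rLaplacian^[k] (P + Q) = rLaplacian^[k] P + rLaplacian^[k] Q := by
  induction k generalizing P Q with
  | zero => rfl
  | succ k ih => rw [Function.iterate_succ_apply, lap_add, ih,
      Function.iterate_succ_apply, Function.iterate_succ_apply]

lemma lapIter_C_mul (k : ℕ) (a : ℝ) (P : MvPolynomial (Fin n) ℝ) :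
    rLaplacian^[k] (C a * P) = C a * rLaplacian^[k] P := by
  induction k generalizing P with
  | zero => rfl
  | succ k ih => rw [Function.iterate_succ_apply, lap_C_mul, ih, Function.iterate_succ_apply]

lemma pderiv_lap_comm (i : Fin n) (P : MvPolynomial (Fin n) ℝ) :
    pderiv i (rLaplacian P) = rLaplacian (pderiv i P) := by
  simp only [rLaplacian, map_sum]
  exact Finset.sum_congr rfl fun j _ => by
    rw [pderiv_pderiv_comm i j, pderiv_pderiv_comm i j]

lemma lap_X_mul (i : Fin n) (Q : MvPolynomial (Fin n) ℝ) :
    rLaplacian (X i * Q) = X i * rLaplacian Q + 2 * pderiv i Q := by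
  unfold rLaplacian
  have key : ∀ j : Fin n, pderiv j (pderiv j (X i * Q)) =
      X i * pderiv j (pderiv j Q) + (if j = i then 2 * pderiv j Q else 0) := by
    intro j
    by_cases hji : j = i
    · subst hji
      simp only [pderiv_mul, pderiv_X_self, one_mul, map_add, if_pos rfl, if_true,
        eq_self_iff_true]
      ring
    · simp only [pderiv_mul, pderiv_X_of_ne (Ne.symm hji), zero_mul, zero_add, map_add,
        if_neg hji]
      ring
  rw [Finset.sum_congr rfl fun j _ => key j, Finset.sum_add_distrib, ← Finset.mul_sum,
    Finset.sum_ite_eq' Finset.univ i (fun j => 2 * pderiv j Q), if_pos (Finset.mem_univ i)]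

lemma lapIter_X_mul (k : ℕ) (i : Fin n) (Q : MvPolynomial (Fin n) ℝ) :
    rLaplacian^[k + 1] (X i * Q) =
      X i * rLaplacian^[k + 1] Q + C ((2 * (k + 1) : ℝ)) * pderiv i (rLaplacian^[k] Q) := by
  induction k with
  | zero =>
    simp only [zero_add, Function.iterate_one, Function.iterate_zero, id_eq, Nat.cast_zero]
    rw [lap_X_mul]
    norm_num [map_ofNat]
  | succ k ih =>
    have hC : (2 : MvPolynomial (Fin n) ℝ) + C ((2 * (k + 1) : ℝ)) =
        C ((2 * (k + 1 + 1) : ℝ)) := by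
      rw [show (2 : MvPolynomial (Fin n) ℝ) = C 2 from (map_ofNat C 2).symm, ← map_add]
      norm_num
      ring_nf
    rw [Function.iterate_succ_apply', ih, lap_add, lap_X_mul, lap_C_mul, ← pderiv_lap_comm,
      ← Function.iterate_succ_apply' rLaplacian k, ← Function.iterate_succ_apply' rLaplacian (k+1)]
    simp only [Nat.succ_eq_add_one]
    push_cast at hC ⊢
    rw [← hC]
    ring

lemma degree_add' (a b : Fin n →₀ ℕ) : (a + b).degree = a.degree + b.degree := by
  simp [Finsupp.degree_eq_weight_one, map_add]

lemma degree_single' (i : Fin n) (k : ℕ) : (Finsupp.single i k).degree = k := by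
  simp [Finsupp.degree_eq_weight_one, Finsupp.weight_apply, Finsupp.sum_single_index]

lemma pderiv_isHomogeneous {P : MvPolynomial (Fin n) ℝ} {m : ℕ} (hP : P.IsHomogeneous m)
    (i : Fin n) : (pderiv i P).IsHomogeneous (m - 1) := by
  rw [P.as_sum, map_sum]
  apply MvPolynomial.IsHomogeneous.sum
  intro σ hσ
  rw [pderiv_monomial]
  by_cases h0 : σ i = 0
  · rw [h0]; simp only [Nat.cast_zero, mul_zero, monomial_zero]
    exact isHomogeneous_zero _ _ _
  · apply isHomogeneous_monomial
    have hdeg : σ.degree = m := by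
      rw [Finsupp.degree_eq_weight_one]; exact hP (mem_support_iff.mp hσ)
    have hle : Finsupp.single i 1 ≤ σ := by
      rw [Finsupp.single_le_iff]; omega
    have hs : (σ - Finsupp.single i 1) + Finsupp.single i 1 = σ := tsub_add_cancel_of_le hle
    have h3 := congrArg Finsupp.degree hs
    rw [degree_add', degree_single'] at h3
    omega

lemma pderiv_eq_zero_of_isHomogeneous_zero {P : MvPolynomial (Fin n) ℝ}
    (hP : P.IsHomogeneous 0) (i : Fin n) : pderiv i P = 0 := by
  rw [P.as_sum, map_sum]
  apply Finset.sum_eq_zero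
  intro σ hσ
  have hdeg : σ.degree = 0 := by
    rw [Finsupp.degree_eq_weight_one]; exact hP (mem_support_iff.mp hσ)
  have hσ0 : σ = 0 := (Finsupp.degree_eq_zero_iff σ).mp hdeg
  subst hσ0
  simp [pderiv_monomial]

lemma lapIter_vanish : ∀ (k m : ℕ) (P : MvPolynomial (Fin n) ℝ),
    P.IsHomogeneous m → m < 2 * k → rLaplacian^[k] P = 0 := by
  intro k
  induction k with
  | zero => omega
  | succ k ih =>
    intro m P hP hm
    rw [Function.iterate_succ_apply]
    by_cases h1 : m ≤ 1
    · have hΔ : rLaplacian P = 0 := by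
        unfold rLaplacian
        apply Finset.sum_eq_zero
        intro j _
        rcases Nat.le_one_iff_eq_zero_or_eq_one.mp h1 with h | h
        · subst h; rw [pderiv_eq_zero_of_isHomogeneous_zero hP, map_zero]
        · subst h
          exact pderiv_eq_zero_of_isHomogeneous_zero
            (by simpa using pderiv_isHomogeneous hP j) j
      rw [hΔ, lapIter_zero]
    · have hΔh : (rLaplacian P).IsHomogeneous (m - 2) := by
        unfold rLaplacian
        apply MvPolynomial.IsHomogeneous.sum
        intro j _
        have h := pderiv_isHomogeneous (pderiv_isHomogeneous hP j) j
        rwa [Nat.sub_sub] at h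
      exact ih (m - 2) _ hΔh (by omega)

lemma Dop_zero (c : ℝ) (i : Fin n) : Dop c i 0 = 0 := by simp [Dop]

lemma Dop_sum {α : Type*} (c : ℝ) (i : Fin n) (s : Finset α)
    (f : α → MvPolynomial (Fin n) ℝ) :
    Dop c i (∑ a ∈ s, f a) = ∑ a ∈ s, Dop c i (f a) := by
  classical
  induction s using Finset.induction with
  | empty => simp [Dop_zero]
  | insert a s hx ih => rw [Finset.sum_insert hx, Finset.sum_insert hx, Dop_add, ih]

lemma DmonL_zero (c : ℝ) (l : List (Fin n)) (P : MvPolynomial (Fin n) ℝ) :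
    DmonL c l 0 P = P := by
  induction l with
  | nil => rfl
  | cons j l ih => show (Dop c j)^[(0 : Fin n →₀ ℕ) j] (DmonL c l 0 P) = P
                   rw [Finsupp.coe_zero, Pi.zero_apply, Function.iterate_zero, id_eq, ih]

noncomputable def acoef (c : ℝ) (m k : ℕ) : ℝ := c ^ (m - k) / (2 ^ k * k.factorial)

lemma acoef_succ_mul (c : ℝ) (N j : ℕ) :
    acoef c (N + 1) (j + 1) * (2 * (j + 1)) = acoef c N j := by
  unfold acoef
  rw [Nat.succ_sub_succ, Nat.factorial_succ]
  have h1 : (2 : ℝ) ^ j ≠ 0 := by positivity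
  have h2 : (j.factorial : ℝ) ≠ 0 := Nat.cast_ne_zero.mpr j.factorial_ne_zero
  have h3 : ((j : ℝ) + 1) ≠ 0 := by positivity
  push_cast
  field_simp
  ring

lemma acoef_c_mul (c : ℝ) {N k : ℕ} (hk : k ≤ N) :
    acoef c (N + 1) k = c * acoef c N k := by
  unfold acoef
  rw [show N + 1 - k = (N - k) + 1 by omega, pow_succ]
  ring

lemma key (c : ℝ) : ∀ (N : ℕ) (σ : Fin n →₀ ℕ), σ.degree = N →
    DmonL c (List.finRange n) σ 1 =
      ∑ k ∈ Finset.range (N + 1), C (acoef c N k) * rLaplacian^[k] (monomial σ 1) := by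
  intro N
  induction N with
  | zero =>
    intro σ hσ
    have h0 : σ = 0 := (Finsupp.degree_eq_zero_iff σ).mp hσ
    subst h0
    rw [DmonL_zero]
    simp [acoef, monomial_zero']
  | succ N ihN =>
    intro σ hσ
    have hne : σ ≠ 0 := by
      intro h; rw [h] at hσ; simp at hσ
    obtain ⟨i, hi⟩ := Finsupp.support_nonempty_iff.mpr hne
    have hipos : σ i ≠ 0 := Finsupp.mem_support_iff.mp hi
    have hle : Finsupp.single i 1 ≤ σ := by rw [Finsupp.single_le_iff]; omega
    set τ := σ - Finsupp.single i 1 with hτ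
    have hs : τ + Finsupp.single i 1 = σ := tsub_add_cancel_of_le hle
    have hτdeg : τ.degree = N := by
      have h3 := congrArg Finsupp.degree hs
      rw [degree_add', degree_single'] at h3
      omega
    set Q := (monomial τ (1 : ℝ)) with hQ
    have hQhom : Q.IsHomogeneous N := isHomogeneous_monomial 1 hτdeg
    have hvan : rLaplacian^[N + 1] Q = 0 := lapIter_vanish (N + 1) N Q hQhom (by omega)
    have hmono : (monomial σ (1 : ℝ)) = X i * Q := by
      rw [← hs, add_comm, monomial_single_add, pow_one]
    have hstep : DmonL c (List.finRange n) σ 1 = Dop c i (DmonL c (List.finRange n) τ 1) := by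
      rw [← hs]; exact DmonL_step c i _ (List.nodup_finRange n) (List.mem_finRange i) τ 1
    have hL : ∀ k, Dop c i (C (acoef c N k) * rLaplacian^[k] Q) =
        C (acoef c N k) * pderiv i (rLaplacian^[k] Q)
          + C (c * acoef c N k) * (X i * rLaplacian^[k] Q) := by
      intro k
      rw [Dop_C_mul]
      show C (acoef c N k) * (pderiv i (rLaplacian^[k] Q)
        + C c * (X i * rLaplacian^[k] Q)) = _
      rw [C_mul]
      ring
    have hR : ∑ k ∈ Finset.range (N + 1 + 1),
          C (acoef c (N + 1) k) * rLaplacian^[k] (monomial σ 1)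
        = (∑ k ∈ Finset.range (N + 1), C (acoef c N k) * pderiv i (rLaplacian^[k] Q))
          + ∑ k ∈ Finset.range (N + 1), C (c * acoef c N k) * (X i * rLaplacian^[k] Q) := by
      rw [hmono, Finset.sum_range_succ']
      have hterm : ∀ j, C (acoef c (N + 1) (j + 1)) * rLaplacian^[j + 1] (X i * Q)
          = C (acoef c (N + 1) (j + 1)) * (X i * rLaplacian^[j + 1] Q)
            + C (acoef c N j) * pderiv i (rLaplacian^[j] Q) := by
        intro j
        rw [lapIter_X_mul, mul_add]
        congr 1
        rw [← mul_assoc, ← C_mul, acoef_succ_mul]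
      rw [Finset.sum_congr rfl fun j _ => hterm j, Finset.sum_add_distrib]
      have hX : (∑ j ∈ Finset.range (N + 1),
            C (acoef c (N + 1) (j + 1)) * (X i * rLaplacian^[j + 1] Q))
          + C (acoef c (N + 1) 0) * rLaplacian^[0] (X i * Q)
          = ∑ k ∈ Finset.range (N + 1), C (c * acoef c N k) * (X i * rLaplacian^[k] Q) := by
        rw [show C (acoef c (N + 1) 0) * rLaplacian^[0] (X i * Q)
            = C (acoef c (N + 1) 0) * (X i * rLaplacian^[0] Q) from rfl,
          ← Finset.sum_range_succ' (fun k => C (acoef c (N + 1) k) * (X i * rLaplacian^[k] Q))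
            (N + 1),
          Finset.sum_range_succ]
        rw [hvan, mul_zero, mul_zero, add_zero]
        exact Finset.sum_congr rfl fun k hk =>
          by rw [acoef_c_mul c (Nat.lt_succ_iff.mp (Finset.mem_range.mp hk))]
      rw [add_right_comm, hX, add_comm]
    rw [hstep, ihN τ hτdeg, Dop_sum, Finset.sum_congr rfl fun k _ => hL k,
      Finset.sum_add_distrib, hR, add_comm]

noncomputable def evalD (P : MvPolynomial (Fin n) ℝ) (x : Fin n → ℝ) :
    (Fin n → ℝ) →L[ℝ] ℝ :=
  ∑ j, eval x (pderiv j P) • ContinuousLinearMap.proj (R := ℝ) (φ := fun _ : Fin n => ℝ) j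

lemma evalD_apply (P : MvPolynomial (Fin n) ℝ) (x v : Fin n → ℝ) :
    evalD P x v = ∑ j, eval x (pderiv j P) * v j := by
  simp [evalD, ContinuousLinearMap.sum_apply, ContinuousLinearMap.proj_apply, smul_eq_mul]

lemma evalD_single (P : MvPolynomial (Fin n) ℝ) (x : Fin n → ℝ) (i : Fin n) :
    evalD P x (Pi.single i 1) = eval x (pderiv i P) := by
  rw [evalD_apply]
  rw [Finset.sum_eq_single i (fun j _ hj => by simp [Pi.single_apply, Ne.symm hj])
    (fun h => absurd (Finset.mem_univ i) h)]
  simp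

lemma evalHasFDerivAt (P : MvPolynomial (Fin n) ℝ) (x : Fin n → ℝ) :
    HasFDerivAt (fun y => eval y P) (evalD P x) x := by
  induction P using MvPolynomial.induction_on with
  | C a =>
    have : evalD (C a : MvPolynomial (Fin n) ℝ) x = 0 := by
      simp [evalD, pderiv_C]
    rw [this]
    simpa [eval_C] using hasFDerivAt_const a x
  | add p q hp hq =>
    have : evalD (p + q) x = evalD p x + evalD q x := by
      simp [evalD, map_add, add_smul, Finset.sum_add_distrib]
    rw [this]
    simpa [eval_add] using hp.fun_add hq
  | mul_X p i hp =>
    have hproj : HasFDerivAt (fun y : Fin n → ℝ => y i)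
        (ContinuousLinearMap.proj (R := ℝ) (φ := fun _ : Fin n => ℝ) i) x :=
      (ContinuousLinearMap.proj (R := ℝ) (φ := fun _ : Fin n => ℝ) i).hasFDerivAt
    have hmul := hp.fun_mul hproj
    have heq : evalD (p * X i) x =
        eval x p • ContinuousLinearMap.proj (R := ℝ) (φ := fun _ : Fin n => ℝ) i
          + x i • evalD p x := by
      refine ContinuousLinearMap.ext fun v => ?_
      simp only [evalD_apply, ContinuousLinearMap.add_apply, ContinuousLinearMap.smul_apply,
        ContinuousLinearMap.proj_apply, smul_eq_mul, pderiv_mul, pderiv_X, map_add, eval_add,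
        eval_mul, eval_X, Pi.single_apply, apply_ite (eval x), map_one, map_zero,
        mul_ite, ite_mul, mul_zero, zero_mul, mul_one, add_mul]
      rw [Finset.sum_add_distrib, Finset.sum_ite_eq, if_pos (Finset.mem_univ i), Finset.mul_sum,
        Finset.sum_congr rfl fun j _ =>
          show eval x (pderiv j p) * x i * v j = x i * (eval x (pderiv j p) * v j) by ring]
      ring
    rw [heq]
    simpa [eval_mul, eval_X] using hmul

noncomputable def fG (t : ℝ) : (Fin n → ℝ) → ℝ :=
  fun x => Real.exp (-(∑ i, x i ^ 2) / (4 * t))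

noncomputable def sqD (x : Fin n → ℝ) : (Fin n → ℝ) →L[ℝ] ℝ :=
  ∑ j, (2 * x j) • ContinuousLinearMap.proj (R := ℝ) (φ := fun _ : Fin n => ℝ) j

lemma sqHasFDerivAt (x : Fin n → ℝ) :
    HasFDerivAt (fun y : Fin n → ℝ => ∑ i, y i ^ 2) (sqD x) x := by
  have h : ∀ j : Fin n, HasFDerivAt (fun y : Fin n → ℝ => y j ^ 2)
      ((2 * x j) • ContinuousLinearMap.proj (R := ℝ) (φ := fun _ : Fin n => ℝ) j) x := by
    intro j
    have hp := (ContinuousLinearMap.proj (R := ℝ) (φ := fun _ : Fin n => ℝ) j).hasFDerivAt (x := x)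
    have hm := hp.mul hp
    have hfun : (fun y : Fin n → ℝ => y j ^ 2) = fun y : Fin n → ℝ => y j * y j :=
      funext fun y => pow_two (y j)
    have hder : (2 * x j) • ContinuousLinearMap.proj (R := ℝ) (φ := fun _ : Fin n => ℝ) j
        = x j • ContinuousLinearMap.proj (R := ℝ) (φ := fun _ : Fin n => ℝ) j
          + x j • ContinuousLinearMap.proj (R := ℝ) (φ := fun _ : Fin n => ℝ) j := by
      rw [two_mul, add_smul]
    rw [hfun, hder]
    exact hm
  exact HasFDerivAt.fun_sum fun j _ => h j

lemma sqD_single (x : Fin n → ℝ) (i : Fin n) : sqD x (Pi.single i 1) = 2 * x i := by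
  simp only [sqD, ContinuousLinearMap.sum_apply, ContinuousLinearMap.smul_apply,
    ContinuousLinearMap.proj_apply, smul_eq_mul]
  rw [Finset.sum_eq_single i (fun j _ hj => by simp [Pi.single_apply, Ne.symm hj])
    (fun hh => absurd (Finset.mem_univ i) hh)]
  simp

lemma fGHasFDerivAt (t : ℝ) (x : Fin n → ℝ) :
    HasFDerivAt (fG (n := n) t) ((fG t x * (-1 / (4 * t))) • sqD x) x := by
  have hinner : HasFDerivAt (fun y : Fin n → ℝ => -(∑ i, y i ^ 2) / (4 * t))
      ((-1 / (4 * t)) • sqD x) x := by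
    have h1 := (sqHasFDerivAt x).const_mul (-1 / (4 * t))
    have heq : (fun y : Fin n → ℝ => -(∑ i, y i ^ 2) / (4 * t)) =
        fun y : Fin n → ℝ => (-1 / (4 * t)) * ∑ i, y i ^ 2 := funext fun y => by ring
    rwa [heq]
  have hexp := (Real.hasDerivAt_exp (-(∑ i, x i ^ 2) / (4 * t))).comp_hasFDerivAt x hinner
  have : Real.exp (-(∑ i, x i ^ 2) / (4 * t)) • ((-1 / (4 * t)) • sqD x)
      = (fG t x * (-1 / (4 * t))) • sqD x := by
    rw [smul_smul]; rfl
  rwa [this] at hexp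

lemma rpd_eval_mul (t : ℝ) (ht : t ≠ 0) (P : MvPolynomial (Fin n) ℝ) (i : Fin n) :
    rpd i (fun x => eval x P * fG t x) =
      fun x => eval x (Dop (-1 / (2 * t)) i P) * fG t x := by
  funext x
  have hprod := (evalHasFDerivAt P x).fun_mul (fGHasFDerivAt t x)
  rw [rpd, hprod.fderiv]
  simp only [ContinuousLinearMap.add_apply, ContinuousLinearMap.smul_apply, smul_eq_mul,
    evalD_single, sqD_single]
  rw [Dop]
  simp only [eval_add, eval_mul, eval_C, eval_X, map_add]
  field_simp
  ring

lemma rpd_iter_eval_mul (t : ℝ) (ht : t ≠ 0) (i : Fin n) (k : ℕ)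
    (P : MvPolynomial (Fin n) ℝ) :
    (rpd i)^[k] (fun x => eval x P * fG t x) =
      fun x => eval x ((Dop (-1 / (2 * t)) i)^[k] P) * fG t x := by
  induction k generalizing P with
  | zero => rfl
  | succ k ih =>
    rw [Function.iterate_succ_apply, rpd_eval_mul t ht, ih, ← Function.iterate_succ_apply]

lemma foldr_eval_mul (t : ℝ) (ht : t ≠ 0) (l : List (Fin n)) (σ : Fin n →₀ ℕ)
    (P : MvPolynomial (Fin n) ℝ) :
    l.foldr (fun i g => (rpd i)^[σ i] g) (fun x => eval x P * fG t x) =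
      fun x => eval x (DmonL (-1 / (2 * t)) l σ P) * fG t x := by
  induction l with
  | nil => rfl
  | cons j l ih =>
    show (rpd j)^[σ j] (l.foldr _ _) = _
    rw [ih, rpd_iter_eval_mul t ht]
    rfl

lemma lapIter_sum {α : Type*} (k : ℕ) (s : Finset α) (f : α → MvPolynomial (Fin n) ℝ) :
    rLaplacian^[k] (∑ a ∈ s, f a) = ∑ a ∈ s, rLaplacian^[k] (f a) := by
  classical
  induction s using Finset.induction with
  | empty => simp [lapIter_zero]
  | insert a s hx ih => rw [Finset.sum_insert hx, Finset.sum_insert hx, lapIter_add, ih]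

end HDG

open HDG

/-- for `h` homogeneous harmonic of degree `d`, `t > 0`, and
`f(x) = exp(−‖x‖²/(4t))`, one has `h(∂/∂x₁,…,∂/∂xₙ) f = (−1/(2t))^d · h(x) · f(x)`. -/
theorem harmonic_diff_gaussian {n d : ℕ} (h : MvPolynomial (Fin n) ℝ)
    (hd : h.IsHomogeneous d) (hharm : rLaplacian h = 0) (t : ℝ) (ht : 0 < t) :
    rpolyOp h (fun x => Real.exp (-(∑ i, x i ^ 2) / (4 * t))) =
      fun x => (-1 / (2 * t)) ^ d * MvPolynomial.eval x h *
        Real.exp (-(∑ i, x i ^ 2) / (4 * t)) := by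
  have ht' : t ≠ 0 := ne_of_gt ht
  set c : ℝ := -1 / (2 * t) with hc
  funext x
  have hfG : (fun x : Fin n → ℝ => Real.exp (-(∑ i, x i ^ 2) / (4 * t))) = fG t := rfl
  have hone : fG (n := n) t = fun x => eval x (1 : MvPolynomial (Fin n) ℝ) * fG t x := by
    funext y; simp
  -- each monomial operator
  have hmon : ∀ σ ∈ h.support, rmonOp σ (fG (n := n) t) =
      fun x => eval x (∑ k ∈ Finset.range (d + 1),
        C (acoef c d k) * rLaplacian^[k] (monomial σ 1)) * fG t x := by
    intro σ hσ
    have hdeg : σ.degree = d := by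
      rw [Finsupp.degree_eq_weight_one]
      exact hd (mem_support_iff.mp hσ)
    rw [rmonOp]
    conv_lhs => rw [hone]
    rw [foldr_eval_mul t ht', key c d σ hdeg]
  -- iterated Laplacian of h vanishes for k ≥ 1
  have hlap : ∀ k, 1 ≤ k → rLaplacian^[k] h = 0 := by
    intro k hk
    obtain ⟨k', rfl⟩ := Nat.exists_eq_add_of_le hk
    rw [add_comm, Function.iterate_add_apply, Function.iterate_one, hharm, lapIter_zero]
  -- polynomial identity
  have hpoly : ∑ σ ∈ h.support, C (h.coeff σ) * (∑ k ∈ Finset.range (d + 1),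
      C (acoef c d k) * rLaplacian^[k] (monomial σ 1)) = C (c ^ d) * h := by
    calc ∑ σ ∈ h.support, C (h.coeff σ) * (∑ k ∈ Finset.range (d + 1),
          C (acoef c d k) * rLaplacian^[k] (monomial σ 1))
        = ∑ σ ∈ h.support, ∑ k ∈ Finset.range (d + 1),
            C (acoef c d k) * rLaplacian^[k] (monomial σ (h.coeff σ)) := by
          refine Finset.sum_congr rfl fun σ _ => ?_
          rw [Finset.mul_sum]
          refine Finset.sum_congr rfl fun k _ => ?_
          rw [show (monomial σ) (h.coeff σ) = C (h.coeff σ) * monomial σ 1 by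
              rw [C_mul_monomial, mul_one], lapIter_C_mul]
          ring
      _ = ∑ k ∈ Finset.range (d + 1), C (acoef c d k) * rLaplacian^[k] h := by
          rw [Finset.sum_comm]
          refine Finset.sum_congr rfl fun k _ => ?_
          rw [← Finset.mul_sum, ← lapIter_sum, support_sum_monomial_coeff]
      _ = C (c ^ d) * h := by
          rw [Finset.sum_eq_single 0 (fun k _ hk0 => by
              rw [hlap k (Nat.one_le_iff_ne_zero.mpr hk0), mul_zero])
            (fun h0 => absurd (Finset.mem_range.mpr (by omega)) h0)]
          simp [acoef]
  -- final assembly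
  show ∑ σ ∈ h.support, h.coeff σ * rmonOp σ (fun x => Real.exp (-(∑ i, x i ^ 2) / (4 * t))) x
      = _
  rw [hfG]
  rw [Finset.sum_congr rfl fun σ hσ => by rw [hmon σ hσ]]
  have : ∑ σ ∈ h.support, h.coeff σ * (eval x (∑ k ∈ Finset.range (d + 1),
      C (acoef c d k) * rLaplacian^[k] (monomial σ 1)) * fG t x)
      = eval x (∑ σ ∈ h.support, C (h.coeff σ) * (∑ k ∈ Finset.range (d + 1),
        C (acoef c d k) * rLaplacian^[k] (monomial σ 1))) * fG t x := by
    rw [map_sum, Finset.sum_mul]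
    exact Finset.sum_congr rfl fun σ _ => by rw [eval_mul, eval_C]; ring
  rw [this, hpoly, eval_mul, eval_C]
  rfl
end

section
/- Let f be a homogeneous polynomial of degree 2k on ℝ^{n+1}. Then ∫_{Sⁿ} f dμ = c · Δ^k f, where Δ^k f is a constant, c = α · (n+1)π^{(n+1)/2}/Γ((n+3)/2), and α = 1/(2^k · k! · ∏_{m=1}^k (n+2m−1)) (signs adjusted to the convention Δ = ∑ ∂²/∂x_i²); dμ is the standard surface measure on Sⁿ. -/
open MvPolynomial MeasureTheory Metric Real


noncomputable def gmom (m : ℕ) : ℝ := (1 + (-1 : ℝ)^m)/2 * Real.Gamma ((m+1)/2)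

theorem ioi_moment (q : ℕ) : ∫ x in Set.Ioi (0:ℝ), x ^ q * Real.exp (-x^2) = (1/2) * Real.Gamma ((q+1)/2) := by
  rw [← integral_rpow_mul_exp_neg_rpow two_pos
    (lt_of_lt_of_le neg_one_lt_zero (Nat.cast_nonneg q))]
  refine setIntegral_congr_fun measurableSet_Ioi fun x hx => ?_
  rw [← Real.rpow_natCast x q, ← Real.rpow_natCast x 2]
  norm_num

theorem integrable_moment (m : ℕ) : Integrable (fun x : ℝ => x ^ m * Real.exp (-x^2)) := by
  have := integrable_rpow_mul_exp_neg_mul_sq (b := 1) one_pos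
    (s := m) (lt_of_lt_of_le neg_one_lt_zero (Nat.cast_nonneg m))
  simpa [Real.rpow_natCast] using this

theorem moment_eq (m : ℕ) : ∫ x : ℝ, x ^ m * Real.exp (-x^2) = gmom m := by
  have h1 : ∫ x in Set.Iic (0:ℝ), x ^ m * Real.exp (-x^2)
      = (-1:ℝ)^m * ∫ x in Set.Ioi (0:ℝ), x ^ m * Real.exp (-x^2) := by
    rw [show Set.Iic (0:ℝ) = Set.Iic (-(0:ℝ)) by norm_num,
      ← integral_comp_neg_Ioi (f := fun x => x ^ m * Real.exp (-x^2)), ← integral_const_mul]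
    refine setIntegral_congr_fun measurableSet_Ioi fun x hx => ?_
    rw [neg_pow]; ring_nf
  have h2 := ioi_moment m
  rw [← intervalIntegral.integral_Iic_add_Ioi (b := (0:ℝ)) (integrable_moment m).integrableOn
      (integrable_moment m).integrableOn, h1, h2, gmom]
  ring

theorem gmom_rec (m : ℕ) (hm : 2 ≤ m) :
    (m : ℝ) * ((m - 1 : ℕ) : ℝ) * gmom (m - 2) = 2 * m * gmom m := by
  obtain ⟨p, rfl⟩ : ∃ p, m = p + 2 := ⟨m - 2, by omega⟩
  have h0 : ((p:ℝ) + 1)/2 ≠ 0 := by positivity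
  have hG : Real.Gamma ((↑(p+2) + 1)/2) = ((p:ℝ)+1)/2 * Real.Gamma (((p:ℝ)+1)/2) := by
    rw [show ((↑(p+2):ℝ) + 1)/2 = ((p:ℝ)+1)/2 + 1 by push_cast; ring, Real.Gamma_add_one h0]
  have hpar : ((-1:ℝ))^(p+2) = (-1:ℝ)^p := by rw [pow_add]; norm_num
  simp only [show p + 2 - 2 = p from rfl, show p + 2 - 1 = p + 1 from rfl, gmom, hG, hpar]
  push_cast
  ring

theorem gmom_one : gmom 1 = 0 := by simp [gmom]

theorem gmom_zero : gmom 0 = Real.sqrt π := by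
  have : ((0:ℕ)+1:ℝ)/2 = 1/2 := by norm_num
  rw [gmom, this, Real.Gamma_one_half_eq]
  norm_num

/-- The Laplacian `Δ = ∑_{i=0}^n ∂²/∂x_i²` on polynomials in `n+1` variables. -/
noncomputable def mvLaplacian {n : ℕ} (P : MvPolynomial (Fin (n + 1)) ℝ) :
    MvPolynomial (Fin (n + 1)) ℝ :=
  ∑ i : Fin (n + 1), pderiv i (pderiv i P)

theorem mvLaplacian_sum {n : ℕ} {α : Type*} (s : Finset α) (F : α → MvPolynomial (Fin (n+1)) ℝ) :
    mvLaplacian (∑ d ∈ s, F d) = ∑ d ∈ s, mvLaplacian (F d) := by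
  simp only [mvLaplacian, map_sum]
  exact Finset.sum_comm

theorem mvLaplacian_iterate_sum {n : ℕ} (k : ℕ) {α : Type*} (s : Finset α)
    (F : α → MvPolynomial (Fin (n+1)) ℝ) :
    mvLaplacian^[k] (∑ d ∈ s, F d) = ∑ d ∈ s, mvLaplacian^[k] (F d) := by
  induction k generalizing F with
  | zero => simp
  | succ k ih =>
    rw [Function.iterate_succ_apply, mvLaplacian_sum, ih]
    simp [Function.iterate_succ_apply]

theorem mvLaplacian_iterate_zero {n : ℕ} (k : ℕ) :
    mvLaplacian^[k] (0 : MvPolynomial (Fin (n+1)) ℝ) = 0 := by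
  simpa using mvLaplacian_iterate_sum (n := n) k (∅ : Finset ℕ) (fun _ => 0)

theorem mvLaplacian_monomial {n : ℕ} (d : Fin (n+1) →₀ ℕ) (c : ℝ) :
    mvLaplacian (monomial d c) = ∑ i : Fin (n+1),
      monomial (d - Finsupp.single i 1 - Finsupp.single i 1)
        (c * ((d i : ℕ) : ℝ) * ((d i - 1 : ℕ) : ℝ)) := by
  simp [mvLaplacian, pderiv_monomial, Finsupp.tsub_apply]

theorem eval0_monomial {n : ℕ} (d : Fin (n+1) →₀ ℕ) (c : ℝ) :
    eval (fun _ => (0:ℝ)) (monomial d c) = if d = 0 then c else 0 := by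
  rw [eval_monomial]
  split_ifs with h
  · simp [h]
  · obtain ⟨i, hi⟩ : ∃ i, d i ≠ 0 := by
      by_contra hc; push_neg at hc; exact h (Finsupp.ext hc)
    rw [Finsupp.prod, Finset.prod_eq_zero (Finsupp.mem_support_iff.2 hi)]
    · simp
    · exact zero_pow hi

theorem key_eval {n : ℕ} : ∀ (k : ℕ) (d : Fin (n+1) →₀ ℕ) (c : ℝ), (∑ i, d i = 2 * k) →
    eval (fun _ => (0:ℝ)) (mvLaplacian^[k] (monomial d c)) * Real.sqrt π ^ (n+1)
      = 4^k * (k.factorial : ℝ) * c * ∏ i, gmom (d i) := by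
  intro k
  induction k with
  | zero =>
    intro d c hd
    have hd0 : d = 0 := by
      ext i
      exact Finset.sum_eq_zero_iff.mp (by simpa using hd) i (Finset.mem_univ i)
    subst hd0
    simp [eval0_monomial, gmom_zero]
  | succ k ih =>
    intro d c hd
    rw [Function.iterate_succ_apply, mvLaplacian_monomial, mvLaplacian_iterate_sum, map_sum,
      Finset.sum_mul]
    have hterm : ∀ i : Fin (n+1),
        eval (fun _ => (0:ℝ)) (mvLaplacian^[k] (monomial
            (d - Finsupp.single i 1 - Finsupp.single i 1)
            (c * ((d i : ℕ) : ℝ) * ((d i - 1 : ℕ) : ℝ)))) * Real.sqrt π ^ (n+1)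
          = 4^k * (k.factorial : ℝ) * c * (2 * ((d i : ℕ) : ℝ)) * ∏ j, gmom (d j) := by
      intro i
      have hsubj : ∀ j, j ≠ i → ((d - Finsupp.single i 1 - Finsupp.single i 1 : Fin (n+1) →₀ ℕ)) j = d j := by
        intro j hj
        simp [Finsupp.tsub_apply, Finsupp.single_eq_of_ne hj]
      have hsubi : ((d - Finsupp.single i 1 - Finsupp.single i 1 : Fin (n+1) →₀ ℕ)) i = d i - 2 := by
        simp [Finsupp.tsub_apply]
        omega
      by_cases h2 : 2 ≤ d i
      · have hdeg : ∑ j, ((d - Finsupp.single i 1 - Finsupp.single i 1 : Fin (n+1) →₀ ℕ)) j = 2 * k := by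
          have e1 : ∑ j, ((d - Finsupp.single i 1 - Finsupp.single i 1 : Fin (n+1) →₀ ℕ)) j
              = (d i - 2) + ∑ j ∈ Finset.univ.erase i, d j := by
            rw [← Finset.add_sum_erase _ _ (Finset.mem_univ i), hsubi]
            exact congrArg (fun t => (d i - 2) + t)
              (Finset.sum_congr rfl fun j hj => hsubj j (Finset.ne_of_mem_erase hj))
          have e2 : d i + ∑ j ∈ Finset.univ.erase i, d j = 2 * (k + 1) := by
            rw [Finset.add_sum_erase _ _ (Finset.mem_univ i)]; exact hd
          omega
        rw [ih _ _ hdeg]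
        rw [← Finset.mul_prod_erase _ _ (Finset.mem_univ i),
          ← Finset.mul_prod_erase _ (fun j => gmom (d j)) (Finset.mem_univ i), hsubi,
          Finset.prod_congr rfl (fun j hj => by rw [hsubj j (Finset.ne_of_mem_erase hj)])]
        have := gmom_rec (d i) h2
        linear_combination (4 ^ k * (k.factorial:ℝ) * c *
          (∏ j ∈ Finset.univ.erase i, gmom (d j))) * this
      · interval_cases h : d i
        · simp [mvLaplacian_iterate_zero]
        · rw [Finset.prod_eq_zero (Finset.mem_univ i) (by rw [h]; exact gmom_one)]
          norm_num [mvLaplacian_iterate_zero]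
    rw [Finset.sum_congr rfl (fun i _ => hterm i)]
    have hsum : ∑ i : Fin (n+1), 4^k * (k.factorial : ℝ) * c * (2 * ((d i : ℕ) : ℝ))
          * ∏ j, gmom (d j)
        = (4^k * (k.factorial : ℝ) * c * 2 * ∏ j, gmom (d j)) * ∑ i, ((d i : ℕ) : ℝ) := by
      rw [Finset.mul_sum]
      exact Finset.sum_congr rfl fun i _ => by ring
    have hcast : (∑ i, ((d i : ℕ) : ℝ)) = 2 * (k + 1 : ℝ) := by
      rw [← Nat.cast_sum, hd]
      push_cast; ring
    rw [hsum, hcast]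
    push_cast [Nat.factorial_succ]
    ring


-- degree of support elements
theorem support_deg {n M : ℕ} {f : MvPolynomial (Fin (n+1)) ℝ} (hf : f.IsHomogeneous M)
    {d : Fin (n+1) →₀ ℕ} (hd : d ∈ f.support) : ∑ i, d i = M := by
  have h := hf (MvPolynomial.mem_support_iff.mp hd)
  rw [← h, Finsupp.weight_apply, Finsupp.sum_fintype]
  · simp
  · simp

theorem eval_mul_scal {n M : ℕ} {f : MvPolynomial (Fin (n+1)) ℝ} (hf : f.IsHomogeneous M)
    (r : ℝ) (x : Fin (n+1) → ℝ) :
    eval (fun i => r * x i) f = r ^ M * eval x f := by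
  rw [eval_eq', eval_eq', Finset.mul_sum]
  refine Finset.sum_congr rfl fun d hd => ?_
  simp_rw [mul_pow, Finset.prod_mul_distrib, Finset.prod_pow_eq_pow_sum, support_deg hf hd]
  ring

-- Gaussian integral of a polynomial
theorem gauss_int {n M : ℕ} (f : MvPolynomial (Fin (n+1)) ℝ) :
    ∫ x : EuclideanSpace ℝ (Fin (n+1)), eval (fun i => x i) f * Real.exp (-‖x‖^2)
      = ∑ d ∈ f.support, f.coeff d * ∏ i, gmom (d i) := by
  have hmp := (EuclideanSpace.volume_preserving_symm_measurableEquiv_toLp (Fin (n+1))).symm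
  rw [MeasurableEquiv.symm_symm] at hmp
  rw [← hmp.integral_comp (MeasurableEquiv.measurableEmbedding _)]
  have hcoord : ∀ (y : Fin (n+1) → ℝ) (i : Fin (n+1)),
      ((MeasurableEquiv.toLp 2 (Fin (n+1) → ℝ)) y) i = y i := fun y i => rfl
  have hnorm : ∀ y : Fin (n+1) → ℝ,
      ‖(MeasurableEquiv.toLp 2 (Fin (n+1) → ℝ)) y‖^2 = ∑ i, (y i)^2 := by
    intro y
    rw [EuclideanSpace.norm_eq, Real.sq_sqrt (by positivity)]
    exact Finset.sum_congr rfl fun i _ => by rw [hcoord, Real.norm_eq_abs, sq_abs]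
  have hint : ∀ y : Fin (n+1) → ℝ,
      eval (fun i => ((MeasurableEquiv.toLp 2 (Fin (n+1) → ℝ)) y) i) f
          * Real.exp (-‖(MeasurableEquiv.toLp 2 (Fin (n+1) → ℝ)) y‖^2)
        = ∑ d ∈ f.support, f.coeff d * ∏ i, ((y i) ^ d i * Real.exp (-(y i)^2)) := by
    intro y
    simp_rw [hnorm, hcoord, eval_eq', ← Finset.sum_neg_distrib, Real.exp_sum,
      Finset.sum_mul, Finset.prod_mul_distrib, mul_assoc]
  rw [MeasureTheory.integral_congr_ae (Filter.Eventually.of_forall fun y => hint y),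
    MeasureTheory.integral_finset_sum]
  · refine Finset.sum_congr rfl fun d hd => ?_
    rw [MeasureTheory.integral_const_mul, MeasureTheory.volume_pi, MeasureTheory.integral_fintype_prod_eq_prod
      (f := fun i (t : ℝ) => t ^ d i * Real.exp (-t^2))]
    exact congrArg _ (Finset.prod_congr rfl fun i _ => moment_eq (d i))
  · intro d hd
    exact (Integrable.fintype_prod (fun i => integrable_moment (d i))).const_mul _

theorem radial_int (n M : ℕ) :
    ∫ ρ : Set.Ioi (0:ℝ), (ρ:ℝ)^M * Real.exp (-(ρ:ℝ)^2) ∂(MeasureTheory.Measure.volumeIoiPow n)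
      = (1/2) * Real.Gamma (((n + M : ℕ) + 1)/2) := by
  simp only [MeasureTheory.Measure.volumeIoiPow, ENNReal.ofReal]
  rw [integral_withDensity_eq_integral_smul
      ((measurable_subtype_coe.pow_const _).real_toNNReal),
    integral_subtype_comap measurableSet_Ioi
      (fun a : ℝ => Real.toNNReal (a^n) • (a^M * Real.exp (-a^2))),
    ← ioi_moment (n + M)]
  refine setIntegral_congr_fun measurableSet_Ioi fun x hx => ?_
  rw [NNReal.smul_def, Real.coe_toNNReal _ (pow_nonneg (le_of_lt hx) _), smul_eq_mul, pow_add]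
  ring

theorem polar_int {n M : ℕ} (f : MvPolynomial (Fin (n+1)) ℝ) (hf : f.IsHomogeneous M) :
    ∫ x : EuclideanSpace ℝ (Fin (n+1)), eval (fun i => x i) f * Real.exp (-‖x‖^2)
      = (∫ x : sphere (0 : EuclideanSpace ℝ (Fin (n+1))) 1,
          eval (fun i => (x : EuclideanSpace ℝ (Fin (n+1))) i) f
          ∂((volume : Measure (EuclideanSpace ℝ (Fin (n+1)))).toSphere))
        * ((1/2) * Real.Gamma (((n + M : ℕ) + 1)/2)) := by
  set E := EuclideanSpace ℝ (Fin (n+1))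
  set G : sphere (0:E) 1 × Set.Ioi (0:ℝ) → ℝ := fun p =>
    (eval (fun i => (p.1 : E) i) f) * ((p.2:ℝ)^M * Real.exp (-((p.2:ℝ))^2)) with hG
  have hdim : Module.finrank ℝ E - 1 = n := by
    rw [show Module.finrank ℝ E = n + 1 from finrank_euclideanSpace_fin]
    omega
  calc ∫ x : E, eval (fun i => x i) f * Real.exp (-‖x‖^2)
      = ∫ x : ({(0:E)}ᶜ : Set E), eval (fun i => (x:E) i) f * Real.exp (-‖(x:E)‖^2)
        ∂((volume : Measure E).comap (↑)) := by
        rw [integral_subtype_comap (measurableSet_singleton _).compl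
          (fun x : E => eval (fun i => x i) f * Real.exp (-‖x‖^2)),
          MeasureTheory.restrict_compl_singleton]
    _ = ∫ x : ({(0:E)}ᶜ : Set E), G (homeomorphUnitSphereProd E x)
        ∂((volume : Measure E).comap (↑)) := by
        refine integral_congr_ae (Filter.Eventually.of_forall fun x => ?_)
        have hx0 : (x : E) ≠ 0 := x.2
        have hn0 : ‖(x:E)‖ ≠ 0 := norm_ne_zero_iff.mpr hx0
        simp only [hG, homeomorphUnitSphereProd_apply_fst_coe,
          homeomorphUnitSphereProd_apply_snd_coe]
        have hcoord : (fun i => (‖(x:E)‖⁻¹ • (x:E) : E) i) = fun i => ‖(x:E)‖⁻¹ * (x:E) i := by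
          funext i; rfl
        rw [hcoord, eval_mul_scal hf, inv_pow]
        have hpow : (‖(x:E)‖ : ℝ)^M ≠ 0 := pow_ne_zero _ hn0
        field_simp
    _ = ∫ p : sphere (0:E) 1 × Set.Ioi (0:ℝ), G p
        ∂(((volume : Measure E).toSphere).prod (Measure.volumeIoiPow (Module.finrank ℝ E - 1))) :=
        (Measure.measurePreserving_homeomorphUnitSphereProd
          (volume : Measure E)).integral_comp (Homeomorph.measurableEmbedding _) G
    _ = _ := by
        rw [hdim]
        simp only [hG]
        rw [MeasureTheory.integral_prod_mul
          (f := fun ω : sphere (0:E) 1 => eval (fun i => (ω:E) i) f)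
          (g := fun ρ : Set.Ioi (0:ℝ) => (ρ:ℝ)^M * Real.exp (-((ρ:ℝ))^2)), radial_int]
theorem gamma_prod (n : ℕ) : ∀ k : ℕ, Real.Gamma (((n:ℝ) + 2*k + 1)/2) * 2^k
    = Real.Gamma (((n:ℝ)+1)/2) * ((∏ m ∈ Finset.Icc 1 k, (n + 2*m - 1) : ℕ) : ℝ) := by
  intro k
  induction k with
  | zero => simp
  | succ k ih =>
    have h1 : ((n:ℝ) + 2*((k+1:ℕ):ℝ) + 1)/2 = ((n:ℝ) + 2*k + 1)/2 + 1 := by push_cast; ring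
    have h2 : ((n:ℝ) + 2*k + 1)/2 ≠ 0 := by positivity
    rw [h1, Real.Gamma_add_one h2, Finset.prod_Icc_succ_top (Nat.le_add_left 1 k),
      show n + 2*(k+1) - 1 = n + 2*k + 1 by omega]
    push_cast
    push_cast at ih
    ring_nf
    ring_nf at ih
    nlinarith [ih]

/-- for `f` homogeneous of degree `2k` on `ℝ^{n+1}`,
`∫_{Sⁿ} f dμ = c · Δ^k f` where `Δ^k f` is a constant,
`c = α · (n+1)π^{(n+1)/2}/Γ((n+3)/2)` and `α = 1/(2^k k! ∏_{m=1}^k (n+2m−1))`. -/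
theorem integral_sphere_homogeneous {n k : ℕ}
    (f : MvPolynomial (Fin (n + 1)) ℝ) (hf : f.IsHomogeneous (2 * k)) :
    ∫ x : sphere (0 : EuclideanSpace ℝ (Fin (n + 1))) 1,
        MvPolynomial.eval (fun i => (x : EuclideanSpace ℝ (Fin (n + 1))) i) f
      ∂((volume : Measure (EuclideanSpace ℝ (Fin (n + 1)))).toSphere) =
    (1 / ((2 ^ k * k.factorial * ∏ m ∈ Finset.Icc 1 k, (n + 2 * m - 1) : ℕ) : ℝ)) *
      ((n + 1) * π ^ ((n + 1 : ℝ) / 2) / Real.Gamma ((n + 3 : ℝ) / 2)) *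
      MvPolynomial.eval (fun _ => 0) (mvLaplacian^[k] f) := by
  have hpolar := polar_int f hf
  have hgauss := gauss_int (M := 2*k) f
  set S : ℝ := ∫ x : sphere (0 : EuclideanSpace ℝ (Fin (n + 1))) 1,
      MvPolynomial.eval (fun i => (x : EuclideanSpace ℝ (Fin (n + 1))) i) f
      ∂((volume : Measure (EuclideanSpace ℝ (Fin (n + 1)))).toSphere) with hS
  set Ssum : ℝ := ∑ d ∈ f.support, f.coeff d * ∏ i, gmom (d i) with hSsum
  set γ : ℝ := (((n + 2*k : ℕ) : ℝ) + 1)/2 with hγ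
  set X : ℝ := (1/2) * Real.Gamma γ with hX
  set E0 : ℝ := MvPolynomial.eval (fun _ => (0:ℝ)) (mvLaplacian^[k] f) with hE0
  set P : ℕ := ∏ m ∈ Finset.Icc 1 k, (n + 2 * m - 1) with hP
  set Cf : ℝ := (1 / ((2 ^ k * k.factorial * P : ℕ) : ℝ)) *
      ((n + 1) * π ^ ((n + 1 : ℝ) / 2) / Real.Gamma ((n + 3 : ℝ) / 2)) with hCf
  have hcomb : S * X = Ssum := by rw [← hpolar, hgauss]
  have hkey : E0 * Real.sqrt π ^ (n+1) = 4^k * (k.factorial : ℝ) * Ssum := by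
    rw [hE0]
    conv_lhs => rw [← support_sum_monomial_coeff f]
    rw [mvLaplacian_iterate_sum, map_sum, Finset.sum_mul,
      Finset.sum_congr rfl (fun d hd => key_eval k d (coeff d f) (support_deg hf hd)),
      hSsum, Finset.mul_sum]
    exact Finset.sum_congr rfl fun d _ => by ring
  -- positivity facts
  have hγpos : 0 < γ := by rw [hγ]; positivity
  have hΓγ : 0 < Real.Gamma γ := Real.Gamma_pos_of_pos hγpos
  have hPpos : 0 < P := by
    rw [hP]
    exact Finset.prod_pos fun m hm => by
      have := (Finset.mem_Icc.mp hm).1; omega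
  have hsπ : Real.sqrt π ^ (n+1) ≠ 0 := by positivity
  have hX0 : X ≠ 0 := by rw [hX]; positivity
  -- the constant identity
  have hsqrt : Real.sqrt π ^ (n+1) = π ^ ((n + 1 : ℝ)/2) := by
    rw [Real.sqrt_eq_rpow, ← Real.rpow_natCast (π ^ ((1:ℝ)/2)) (n+1),
      ← Real.rpow_mul pi_pos.le]
    congr 1
    push_cast
    ring
  have hΓ3 : Real.Gamma (((n:ℝ) + 3)/2) = ((n:ℝ)+1)/2 * Real.Gamma (((n:ℝ)+1)/2) := by
    rw [show ((n:ℝ)+3)/2 = ((n:ℝ)+1)/2 + 1 by ring,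
      Real.Gamma_add_one (by positivity)]
  have hγ2 : γ = ((n:ℝ) + 2*k + 1)/2 := by rw [hγ]; push_cast; ring
  have hgp := gamma_prod n k
  rw [← hγ2, ← hP] at hgp
  have hΓ3pos : 0 < Real.Gamma (((n:ℝ)+3)/2) := by
    rw [hΓ3]
    have : 0 < Real.Gamma (((n:ℝ)+1)/2) := Real.Gamma_pos_of_pos (by positivity)
    positivity
  have hconst : Real.sqrt π ^ (n+1) = Cf * X * (4^k * (k.factorial : ℝ)) := by
    rw [hsqrt, hCf, hX]
    have hcast : ((2 ^ k * k.factorial * P : ℕ) : ℝ)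
        = 2^k * (k.factorial : ℝ) * (P : ℝ) := by push_cast; ring
    rw [hcast]
    have hfact : (0:ℝ) < (k.factorial : ℝ) := by positivity
    have hgam3 : Real.Gamma ((n + 3 : ℝ)/2) = Real.Gamma (((n:ℝ) + 3)/2) := by norm_num
    rw [hgam3]
    field_simp
    have h4 : (4:ℝ)^k = 2^k * 2^k := by rw [show (4:ℝ) = 2*2 by norm_num, mul_pow]
    rw [hΓ3, h4]
    linear_combination (-(((n:ℝ)+1) * 2^k)) * hgp
  -- conclude
  apply mul_right_cancel₀ hX0
  rw [hcomb]
  apply mul_right_cancel₀ hsπ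
  linear_combination Ssum * hconst - (Cf * X) * hkey
end

section
/- Let Λ ⊂ ℝⁿ be an integral lattice (⟨γ,γ⟩ ∈ ℤ for all γ ∈ Λ) and m a positive integer. Define a_m = n²·∑_{(γ,δ)∈Λ×Λ, ‖γ‖²+‖δ‖²=m} (⟨γ,δ⟩² − (1/n)‖γ‖²‖δ‖²). Then a_m ∈ 2n·ℤ, and if n is even then a_m ∈ 4n·ℤ. -/
set_option maxHeartbeats 1000000

open Finset

section Aux

def pmapAux {β : Type*} [Neg β] (b1 b2 bs : Bool) (p : β × β) : β × β :=
  ((cond b1 (-(cond bs p.2 p.1)) (cond bs p.2 p.1)),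
   (cond b2 (-(cond bs p.1 p.2)) (cond bs p.1 p.2)))

lemma pmapAux_comp {β : Type*} [AddGroup β] (b1 b2 bs c1 c2 cs : Bool) :
    pmapAux (β := β) b1 b2 bs ∘ pmapAux c1 c2 cs =
      pmapAux (xor b1 (cond bs c2 c1)) (xor b2 (cond bs c1 c2)) (xor bs cs) := by
  funext p
  cases bs <;> cases cs <;> cases b1 <;> cases b2 <;> cases c1 <;> cases c2 <;>
    simp [pmapAux, neg_neg]

lemma pmapAux_id {β : Type*} [AddGroup β] : pmapAux (β := β) false false false = id := by
  funext p; simp [pmapAux]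

lemma orbit_sum {α : Type*} [DecidableEq α] (L : List (α → α)) (hid : id ∈ L)
    (hinv : ∀ g ∈ L, ∃ g' ∈ L, ∀ y, g' (g y) = y)
    (hcomp : ∀ g ∈ L, ∀ h ∈ L, g ∘ h ∈ L) (f : α → ℝ) :
    ∀ s : Finset α, (∀ x ∈ s, (L.map (fun g => g x)).Nodup) →
      (∀ x ∈ s, ∀ g ∈ L, g x ∈ s) → (∀ x ∈ s, ∀ g ∈ L, f (g x) = f x) →
      ∃ T : Finset α, T ⊆ s ∧ ∑ x ∈ s, f x = L.length * ∑ x ∈ T, f x := by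
  intro s
  induction s using Finset.strongInduction with
  | _ s ih =>
    intro hnd hcl hfi
    rcases s.eq_empty_or_nonempty with rfl | ⟨x, hx⟩
    · exact ⟨∅, by simp⟩
    · set O : Finset α := (L.map (fun g => g x)).toFinset with hO
      have hmemO : ∀ y, y ∈ O ↔ ∃ g ∈ L, g x = y := by
        intro y; simp [hO, List.mem_map]
      have hxO : x ∈ O := (hmemO x).2 ⟨id, hid, rfl⟩
      have hOs : O ⊆ s := by
        intro y hy; rcases (hmemO y).1 hy with ⟨g, hg, rfl⟩; exact hcl x hx g hg
      have hsumO : ∑ y ∈ O, f y = L.length * f x := by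
        rw [hO, List.sum_toFinset _ (hnd x hx), List.map_map]
        have : L.map (f ∘ fun g => g x) = L.map (fun _ => f x) :=
          List.map_congr_left (fun g hg => hfi x hx g hg)
        rw [this, List.map_const', List.sum_replicate, nsmul_eq_mul]
      have hsub : s \ O ⊂ s := by
        refine Finset.sdiff_ssubset hOs ⟨x, hxO⟩
      have hcl' : ∀ y ∈ s \ O, ∀ g ∈ L, g y ∈ s \ O := by
        intro y hy g hg
        rcases Finset.mem_sdiff.1 hy with ⟨hys, hyO⟩
        refine Finset.mem_sdiff.2 ⟨hcl y hys g hg, fun hgyO => hyO ?_⟩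
        rcases (hmemO _).1 hgyO with ⟨h, hh, hhx⟩
        rcases hinv g hg with ⟨g', hg', hgg'⟩
        have : y = (g' ∘ h) x := by
          rw [Function.comp_apply, hhx, hgg' y]
        exact (hmemO y).2 ⟨g' ∘ h, hcomp g' hg' h hh, this.symm⟩
      rcases ih (s \ O) hsub (fun y hy => hnd y (Finset.mem_sdiff.1 hy).1)
          hcl' (fun y hy => hfi y (Finset.mem_sdiff.1 hy).1) with ⟨T', hT's, hT'⟩
      have hxT' : x ∉ T' := fun h => (Finset.mem_sdiff.1 (hT's h)).2 hxO
      refine ⟨insert x T', ?_, ?_⟩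
      · intro y hy
        rcases Finset.mem_insert.1 hy with rfl | hy
        · exact hx
        · exact (Finset.mem_sdiff.1 (hT's hy)).1
      · rw [← Finset.sum_sdiff hOs, hT', hsumO, Finset.sum_insert hxT']
        ring


lemma pmapAux_inv {β : Type*} [AddGroup β] (b1 b2 bs : Bool) (y : β × β) :
    pmapAux (cond bs b2 b1) (cond bs b1 b2) bs (pmapAux b1 b2 bs y) = y := by
  have h := congrFun (pmapAux_comp (cond bs b2 b1) (cond bs b1 b2) bs b1 b2 bs) y
  simp only [Function.comp_apply] at h
  rw [h]
  cases bs <;> cases b1 <;> cases b2 <;> simp [pmapAux]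

noncomputable def latSummand {n : ℕ} (Λ : Submodule ℤ (Fin n → ℝ)) (p : Λ × Λ) : ℝ :=
  ((∑ l, (p.1 : Fin n → ℝ) l * (p.2 : Fin n → ℝ) l) ^ 2 -
    (1 / n) * (∑ l, (p.1 : Fin n → ℝ) l ^ 2) * (∑ l, (p.2 : Fin n → ℝ) l ^ 2))

lemma sumsq_neg {n : ℕ} {Λ : Submodule ℤ (Fin n → ℝ)} (a : Λ) :
    ∑ l, ((-a : Λ) : Fin n → ℝ) l ^ 2 = ∑ l, (a : Fin n → ℝ) l ^ 2 := by
  refine Finset.sum_congr rfl fun l _ => ?_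
  push_cast
  simp [neg_sq]

lemma summul_neg_left {n : ℕ} {Λ : Submodule ℤ (Fin n → ℝ)} (a b : Λ) :
    ∑ l, ((-a : Λ) : Fin n → ℝ) l * (b : Fin n → ℝ) l
      = -∑ l, (a : Fin n → ℝ) l * (b : Fin n → ℝ) l := by
  rw [← Finset.sum_neg_distrib]
  refine Finset.sum_congr rfl fun l _ => ?_
  push_cast
  simp only [Pi.neg_apply]
  ring

lemma summul_neg_right {n : ℕ} {Λ : Submodule ℤ (Fin n → ℝ)} (a b : Λ) :
    ∑ l, (a : Fin n → ℝ) l * ((-b : Λ) : Fin n → ℝ) l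
      = -∑ l, (a : Fin n → ℝ) l * (b : Fin n → ℝ) l := by
  rw [← Finset.sum_neg_distrib]
  refine Finset.sum_congr rfl fun l _ => ?_
  push_cast
  simp only [Pi.neg_apply]
  ring

lemma summul_comm {n : ℕ} {Λ : Submodule ℤ (Fin n → ℝ)} (a b : Λ) :
    ∑ l, (b : Fin n → ℝ) l * (a : Fin n → ℝ) l
      = ∑ l, (a : Fin n → ℝ) l * (b : Fin n → ℝ) l :=
  Finset.sum_congr rfl fun l _ => mul_comm _ _

lemma latSummand_pmap {n : ℕ} (Λ : Submodule ℤ (Fin n → ℝ)) (b1 b2 bs : Bool) (p : Λ × Λ) :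
    latSummand Λ (pmapAux b1 b2 bs p) = latSummand Λ p := by
  cases b1 <;> cases b2 <;> cases bs <;>
    simp only [pmapAux, cond_true, cond_false, latSummand] <;>
    simp only [sumsq_neg, summul_neg_left, summul_neg_right, summul_comm, neg_neg, neg_sq] <;>
    ring

end Aux

lemma sumsq_pair_pmap {n : ℕ} {Λ : Submodule ℤ (Fin n → ℝ)} (b1 b2 bs : Bool) (p : Λ × Λ) :
    (∑ l, ((pmapAux b1 b2 bs p).1 : Fin n → ℝ) l ^ 2) +
      (∑ l, ((pmapAux b1 b2 bs p).2 : Fin n → ℝ) l ^ 2) =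
    (∑ l, (p.1 : Fin n → ℝ) l ^ 2) + (∑ l, (p.2 : Fin n → ℝ) l ^ 2) := by
  cases b1 <;> cases b2 <;> cases bs <;>
    simp only [pmapAux, cond_true, cond_false, sumsq_neg] <;> ring

lemma neg_ne_self_lat {n : ℕ} {Λ : Submodule ℤ (Fin n → ℝ)} {a : Λ} (ha : a ≠ 0) : a ≠ -a := by
  intro h
  apply ha
  have h2 : (a : Fin n → ℝ) = -(a : Fin n → ℝ) := by
    conv_lhs => rw [show a = -a from h]
    push_cast
    ring
  have h4 : (a : Fin n → ℝ) = 0 := by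
    funext l
    have := congrFun h2 l
    simp only [Pi.neg_apply, Pi.zero_apply] at this ⊢
    linarith
  exact Subtype.ext h4

/-- for an integral lattice `Λ ⊂ ℝⁿ` and a positive integer `m`, the number
`a_m = n²·∑_{(γ,δ)∈Λ×Λ, ‖γ‖²+‖δ‖²=m} (⟨γ,δ⟩² − (1/n)‖γ‖²‖δ‖²)`
lies in `2n·ℤ`, and in `4n·ℤ` when `n` is even. -/
theorem a_m_divisibility {n : ℕ} (Λ : Submodule ℤ (Fin n → ℝ))
    [DiscreteTopology Λ] [IsZLattice ℝ Λ]
    (hint : ∀ γ ∈ Λ, ∃ z : ℤ, ∑ l, γ l * γ l = (z : ℝ))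
    (m : ℕ) (hm : 0 < m) :
    (∃ z : ℤ,
      (n : ℝ) ^ 2 *
        ∑ᶠ p ∈ {p : Λ × Λ |
            (∑ l, (p.1 : Fin n → ℝ) l ^ 2) + (∑ l, (p.2 : Fin n → ℝ) l ^ 2) = (m : ℝ)},
          ((∑ l, (p.1 : Fin n → ℝ) l * (p.2 : Fin n → ℝ) l) ^ 2 -
            (1 / n) * (∑ l, (p.1 : Fin n → ℝ) l ^ 2) * (∑ l, (p.2 : Fin n → ℝ) l ^ 2)) =
        2 * n * z) ∧
    (Even n → ∃ z : ℤ,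
      (n : ℝ) ^ 2 *
        ∑ᶠ p ∈ {p : Λ × Λ |
            (∑ l, (p.1 : Fin n → ℝ) l ^ 2) + (∑ l, (p.2 : Fin n → ℝ) l ^ 2) = (m : ℝ)},
          ((∑ l, (p.1 : Fin n → ℝ) l * (p.2 : Fin n → ℝ) l) ^ 2 -
            (1 / n) * (∑ l, (p.1 : Fin n → ℝ) l ^ 2) * (∑ l, (p.2 : Fin n → ℝ) l ^ 2)) =
        4 * n * z) := by
  classical
  rcases Nat.eq_zero_or_pos n with hn0 | hn
  · have hc : (n : ℝ) = 0 := by rw [hn0]; norm_num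
    constructor
    · exact ⟨0, by rw [hc]; norm_num⟩
    · exact fun _ => ⟨0, by rw [hc]; norm_num⟩
  have hne : (n : ℝ) ≠ 0 := Nat.cast_ne_zero.2 hn.ne'
  set S : Set (Λ × Λ) := {p : Λ × Λ |
      (∑ l, (p.1 : Fin n → ℝ) l ^ 2) + (∑ l, (p.2 : Fin n → ℝ) l ^ 2) = (m : ℝ)} with hSdef
  -- finiteness of S
  have hSfin : S.Finite := by
    have hdisc : DiscreteTopology Λ.toAddSubgroup := ‹DiscreteTopology Λ›
    have hclosed : IsClosed (Λ.toAddSubgroup : Set (Fin n → ℝ)) :=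
      AddSubgroup.isClosed_of_discrete
    have hball : (Metric.closedBall (0 : Fin n → ℝ) (Real.sqrt m) ∩
        (Λ.toAddSubgroup : Set (Fin n → ℝ))).Finite :=
      Metric.finite_isBounded_inter_isClosed DiscreteTopology.isDiscrete Metric.isBounded_closedBall hclosed
    have h1 : ({γ : Λ | (γ : Fin n → ℝ) ∈ Metric.closedBall 0 (Real.sqrt m)}).Finite := by
      have hpre := Set.Finite.preimage
        (f := (Subtype.val : Λ → (Fin n → ℝ))) (Subtype.val_injective.injOn) hball
      refine hpre.subset ?_
      intro γ hγ
      exact ⟨hγ, γ.2⟩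
    have hbound : ∀ γ : Λ, (∑ l, (γ : Fin n → ℝ) l ^ 2) ≤ (m : ℝ) →
        (γ : Fin n → ℝ) ∈ Metric.closedBall 0 (Real.sqrt m) := by
      intro γ hγ
      rw [Metric.mem_closedBall, dist_zero_right]
      refine (pi_norm_le_iff_of_nonneg (Real.sqrt_nonneg _)).2 fun l => ?_
      have h2 : (γ : Fin n → ℝ) l ^ 2 ≤ (m : ℝ) := by
        refine le_trans (Finset.single_le_sum (f := fun l => (γ : Fin n → ℝ) l ^ 2)
          (fun i _ => sq_nonneg _) (Finset.mem_univ l)) hγ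
      rw [Real.norm_eq_abs, ← Real.sqrt_sq_eq_abs]
      exact Real.sqrt_le_sqrt h2
    refine (h1.prod h1).subset ?_
    rintro ⟨γ, δ⟩ hp
    have hA : (0 : ℝ) ≤ ∑ l, (γ : Fin n → ℝ) l ^ 2 := Finset.sum_nonneg fun i _ => sq_nonneg _
    have hB : (0 : ℝ) ≤ ∑ l, (δ : Fin n → ℝ) l ^ 2 := Finset.sum_nonneg fun i _ => sq_nonneg _
    have hAB : (∑ l, (γ : Fin n → ℝ) l ^ 2) + (∑ l, (δ : Fin n → ℝ) l ^ 2) = (m : ℝ) := hp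
    exact ⟨hbound γ (by linarith), hbound δ (by linarith)⟩
  -- integer data
  choose aZ haZ using fun γ : Λ => hint γ γ.2
  have hsq : ∀ γ : Λ, ∑ l, (γ : Fin n → ℝ) l ^ 2 = ((aZ γ : ℤ) : ℝ) := by
    intro γ
    rw [← haZ γ]
    exact Finset.sum_congr rfl fun l _ => sq ((γ : Fin n → ℝ) l)
  set cZ : Λ × Λ → ℤ := fun p => aZ (p.1 + p.2) - aZ p.1 - aZ p.2 with hcZdef
  have hcZ : ∀ p : Λ × Λ, ((cZ p : ℤ) : ℝ)
      = 2 * ∑ l, (p.1 : Fin n → ℝ) l * (p.2 : Fin n → ℝ) l := by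
    intro p
    have hexp : ∑ l, ((p.1 + p.2 : Λ) : Fin n → ℝ) l * ((p.1 + p.2 : Λ) : Fin n → ℝ) l
        = (∑ l, (p.1 : Fin n → ℝ) l * (p.1 : Fin n → ℝ) l)
          + (2 * ∑ l, (p.1 : Fin n → ℝ) l * (p.2 : Fin n → ℝ) l)
          + ∑ l, (p.2 : Fin n → ℝ) l * (p.2 : Fin n → ℝ) l := by
      rw [Finset.mul_sum, ← Finset.sum_add_distrib, ← Finset.sum_add_distrib]
      refine Finset.sum_congr rfl fun l _ => ?_
      push_cast
      simp only [Pi.add_apply]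
      ring
    have h1 := haZ (p.1 + p.2)
    have h2 := haZ p.1
    have h3 := haZ p.2
    rw [h1] at hexp
    rw [h2, h3] at hexp
    simp only [hcZdef]
    push_cast
    linarith [hexp]
  -- key pointwise identity
  have hkey : ∀ p : Λ × Λ, 4 * ((n : ℝ) ^ 2 * latSummand Λ p)
      = (n : ℝ) ^ 2 * ((cZ p : ℤ) : ℝ) ^ 2
        - 4 * (n : ℝ) * ((aZ p.1 : ℤ) : ℝ) * ((aZ p.2 : ℤ) : ℝ) := by
    intro p
    rw [hcZ p, ← hsq p.1, ← hsq p.2]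
    unfold latSummand
    field_simp
    ring
  -- the lists of symmetries
  set L4 : List (Λ × Λ → Λ × Λ) := [pmapAux false false false, pmapAux true false false,
    pmapAux false true false, pmapAux true true false] with hL4
  set L8 : List (Λ × Λ → Λ × Λ) := [pmapAux false false false, pmapAux true false false,
    pmapAux false true false, pmapAux true true false, pmapAux false false true,
    pmapAux true false true, pmapAux false true true, pmapAux true true true] with hL8
  have hmemL4 : ∀ b1 b2, pmapAux (β := Λ) b1 b2 false ∈ L4 := by
    intro b1 b2
    cases b1 <;> cases b2 <;> simp [hL4]
  have hmemL8 : ∀ b1 b2 bs, pmapAux (β := Λ) b1 b2 bs ∈ L8 := by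
    intro b1 b2 bs
    cases b1 <;> cases b2 <;> cases bs <;> simp [hL8]
  have hidL4 : id ∈ L4 := by
    have := hmemL4 false false
    rwa [pmapAux_id] at this
  have hidL8 : id ∈ L8 := by
    have := hmemL8 false false false
    rwa [pmapAux_id] at this
  have hL4form : ∀ g ∈ L4, ∃ b1 b2, g = pmapAux b1 b2 false := by
    intro g hg
    simp only [hL4, List.mem_cons, List.not_mem_nil, or_false] at hg
    rcases hg with rfl | rfl | rfl | rfl
    exacts [⟨false, false, rfl⟩, ⟨true, false, rfl⟩, ⟨false, true, rfl⟩, ⟨true, true, rfl⟩]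
  have hL8form : ∀ g ∈ L8, ∃ b1 b2 bs, g = pmapAux b1 b2 bs := by
    intro g hg
    simp only [hL8, List.mem_cons, List.not_mem_nil, or_false] at hg
    rcases hg with rfl | rfl | rfl | rfl | rfl | rfl | rfl | rfl
    exacts [⟨false, false, false, rfl⟩, ⟨true, false, false, rfl⟩, ⟨false, true, false, rfl⟩,
      ⟨true, true, false, rfl⟩, ⟨false, false, true, rfl⟩, ⟨true, false, true, rfl⟩,
      ⟨false, true, true, rfl⟩, ⟨true, true, true, rfl⟩]
  have hinvL4 : ∀ g ∈ L4, ∃ g' ∈ L4, ∀ y, g' (g y) = y := by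
    intro g hg
    obtain ⟨b1, b2, rfl⟩ := hL4form g hg
    exact ⟨pmapAux b1 b2 false, hmemL4 b1 b2, fun y => pmapAux_inv b1 b2 false y⟩
  have hinvL8 : ∀ g ∈ L8, ∃ g' ∈ L8, ∀ y, g' (g y) = y := by
    intro g hg
    obtain ⟨b1, b2, bs, rfl⟩ := hL8form g hg
    exact ⟨pmapAux (cond bs b2 b1) (cond bs b1 b2) bs, hmemL8 _ _ _,
      fun y => pmapAux_inv b1 b2 bs y⟩
  have hcompL4 : ∀ g ∈ L4, ∀ h ∈ L4, g ∘ h ∈ L4 := by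
    intro g hg h hh
    obtain ⟨b1, b2, rfl⟩ := hL4form g hg
    obtain ⟨c1, c2, rfl⟩ := hL4form h hh
    rw [pmapAux_comp]
    exact hmemL4 _ _
  have hcompL8 : ∀ g ∈ L8, ∀ h ∈ L8, g ∘ h ∈ L8 := by
    intro g hg h hh
    obtain ⟨b1, b2, bs, rfl⟩ := hL8form g hg
    obtain ⟨c1, c2, cs, rfl⟩ := hL8form h hh
    rw [pmapAux_comp]
    exact hmemL8 _ _ _
  -- the finset and its pieces
  set s0 : Finset (Λ × Λ) := hSfin.toFinset with hs0def
  have hmem0 : ∀ p : Λ × Λ, p ∈ s0 ↔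
      (∑ l, (p.1 : Fin n → ℝ) l ^ 2) + (∑ l, (p.2 : Fin n → ℝ) l ^ 2) = (m : ℝ) := by
    intro p
    rw [hs0def, Set.Finite.mem_toFinset]
    exact Iff.rfl
  have hs0cl : ∀ p ∈ s0, ∀ b1 b2 bs, pmapAux (β := Λ) b1 b2 bs p ∈ s0 := by
    intro p hp b1 b2 bs
    rw [hmem0] at hp ⊢
    rw [sumsq_pair_pmap]
    exact hp
  set sD : Finset (Λ × Λ) := s0.filter (fun p => p.2 = p.1 ∨ p.2 = -p.1) with hsDdef
  set sR : Finset (Λ × Λ) := s0.filter (fun p => ¬(p.2 = p.1 ∨ p.2 = -p.1)) with hsRdef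
  set sZ : Finset (Λ × Λ) := sR.filter (fun p => p.1 = 0 ∨ p.2 = 0) with hsZdef
  set s2 : Finset (Λ × Λ) := sR.filter (fun p => ¬(p.1 = 0 ∨ p.2 = 0)) with hs2def
  -- sZ contributes zero
  have hZzero : ∀ p ∈ sZ, (n : ℝ) ^ 2 * latSummand Λ p = 0 := by
    intro p hp
    rw [hsZdef, Finset.mem_filter] at hp
    rcases hp.2 with h | h
    · have h0 : (p.1 : Fin n → ℝ) = 0 := by rw [h]; rfl
      simp [latSummand, h0]
    · have h0 : (p.2 : Fin n → ℝ) = 0 := by rw [h]; rfl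
      simp [latSummand, h0]
  -- facts on sD
  have hDnz : ∀ p ∈ sD, p.1 ≠ 0 ∧ p.2 ≠ 0 := by
    intro p hp
    rw [hsDdef, Finset.mem_filter] at hp
    obtain ⟨h0, hd⟩ := hp
    have hAB := (hmem0 p).1 h0
    have hBA : (∑ l, (p.2 : Fin n → ℝ) l ^ 2) = ∑ l, (p.1 : Fin n → ℝ) l ^ 2 := by
      rcases hd with h | h
      · rw [h]
      · rw [h, sumsq_neg]
    have hmpos : (0 : ℝ) < m := by exact_mod_cast hm
    have hA2 : (∑ l, (p.1 : Fin n → ℝ) l ^ 2) = m / 2 := by linarith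
    constructor
    · intro h
      have h0 : (∑ l, (p.1 : Fin n → ℝ) l ^ 2) = 0 := by rw [h]; simp
      linarith
    · intro h
      have h0 : (∑ l, (p.2 : Fin n → ℝ) l ^ 2) = 0 := by rw [h]; simp
      rw [hBA] at h0
      linarith
  -- closure of sD under L4
  have hsDcl : ∀ p ∈ sD, ∀ g ∈ L4, g p ∈ sD := by
    intro p hp g hg
    obtain ⟨b1, b2, rfl⟩ := hL4form g hg
    rw [hsDdef, Finset.mem_filter] at hp ⊢
    obtain ⟨h0, hd⟩ := hp
    refine ⟨hs0cl p h0 b1 b2 false, ?_⟩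
    cases b1 <;> cases b2 <;>
      simp only [pmapAux, cond_true, cond_false, neg_neg, neg_inj, neg_eq_iff_eq_neg] <;>
      tauto
  -- value on sD
  have hDval : ∀ p ∈ sD, (n : ℝ) ^ 2 * latSummand Λ p
      = (n : ℝ) * ((n : ℝ) - 1) * ((aZ p.1 : ℤ) : ℝ) ^ 2 := by
    intro p hp
    rw [hsDdef, Finset.mem_filter] at hp
    obtain ⟨h0, hd⟩ := hp
    have hb : ((aZ p.2 : ℤ) : ℝ) = ((aZ p.1 : ℤ) : ℝ) := by
      rw [← hsq, ← hsq]
      rcases hd with h | h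
      · rw [h]
      · rw [h, sumsq_neg]
    have hc2 : ((cZ p : ℤ) : ℝ) ^ 2 = 4 * ((aZ p.1 : ℤ) : ℝ) ^ 2 := by
      have hc := hcZ p
      rcases hd with h | h
      · rw [h, haZ p.1] at hc
        rw [hc]; ring
      · rw [h, summul_neg_right, haZ p.1] at hc
        rw [hc]; ring
    have hk := hkey p
    rw [hc2, hb] at hk
    linear_combination hk / 4
  -- Nodup on sD
  have hsDnd : ∀ p ∈ sD, (L4.map (fun g => g p)).Nodup := by
    intro p hp
    obtain ⟨h1, h2⟩ := hDnz p hp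
    have f1 : p.1 ≠ -p.1 := neg_ne_self_lat h1
    have f2 : p.2 ≠ -p.2 := neg_ne_self_lat h2
    have f1' : -p.1 ≠ p.1 := fun h => f1 h.symm
    have f2' : -p.2 ≠ p.2 := fun h => f2 h.symm
    simp only [hL4, List.map_cons, List.map_nil, pmapAux, cond_true, cond_false,
      List.nodup_cons, List.mem_cons, List.not_mem_nil, or_false, List.nodup_nil,
      and_true, Prod.mk.injEq, not_or]
    tauto
  -- orbit decomposition on sD
  obtain ⟨TD, hTDsub, hTDsum⟩ := orbit_sum L4 hidL4 hinvL4 hcompL4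
    (fun p => (n : ℝ) ^ 2 * latSummand Λ p) sD hsDnd hsDcl
    (fun p _ g hg => by
      obtain ⟨b1, b2, rfl⟩ := hL4form g hg
      simp only [latSummand_pmap])
  have hTDlen : ((L4.length : ℕ) : ℝ) = 4 := by rw [hL4]; norm_num
  set K : ℤ := ∑ p ∈ TD, (aZ p.1) ^ 2 with hKdef
  have hsDsum : ∑ p ∈ sD, (n : ℝ) ^ 2 * latSummand Λ p
      = 4 * ((n : ℝ) * ((n : ℝ) - 1) * ((K : ℤ) : ℝ)) := by
    rw [hTDsum, hTDlen]
    congr 1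
    rw [Finset.sum_congr rfl (fun p hp => hDval p (hTDsub hp))]
    rw [← Finset.mul_sum]
    congr 1
    rw [hKdef]
    push_cast
    rfl
  -- closure of s2 under L8
  have hs2mem : ∀ p : Λ × Λ, p ∈ s2 ↔ (p ∈ s0 ∧ (p.2 ≠ p.1 ∧ p.2 ≠ -p.1)
      ∧ (p.1 ≠ 0 ∧ p.2 ≠ 0)) := by
    intro p
    rw [hs2def, Finset.mem_filter, hsRdef, Finset.mem_filter]
    push_neg
    tauto
  have hs2cl : ∀ p ∈ s2, ∀ g ∈ L8, g p ∈ s2 := by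
    intro p hp g hg
    obtain ⟨b1, b2, bs, rfl⟩ := hL8form g hg
    rw [hs2mem] at hp ⊢
    obtain ⟨h0, ⟨hd1, hd2⟩, hz1, hz2⟩ := hp
    have e1 : p.1 ≠ p.2 := fun h => hd1 h.symm
    have e2 : p.1 ≠ -p.2 := fun h => hd2 (by rw [h, neg_neg])
    have e3 : -p.1 ≠ p.2 := fun h => e2 (by rw [← h, neg_neg])
    have e4 : -p.2 ≠ p.1 := fun h => e2 h.symm
    have e5 : -p.1 ≠ -p.2 := fun h => e1 (neg_injective h)
    have e6 : -p.2 ≠ -p.1 := fun h => hd1 (neg_injective h)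
    have e7 : p.2 ≠ -p.1 := hd2
    have e8 : -p.2 ≠ p.1 := e4
    refine ⟨hs0cl p h0 b1 b2 bs, ?_, ?_⟩ <;>
      cases b1 <;> cases b2 <;> cases bs <;>
      simp only [pmapAux, cond_true, cond_false, neg_neg, neg_eq_zero, not_or, ne_eq,
        hd1, hd2, e1, e2, e3, e4, e5, e6, e7, e8, hz1, hz2,
        not_false_iff, and_self, and_true, true_and]
  -- Nodup on s2
  have hs2nd : ∀ p ∈ s2, (L8.map (fun g => g p)).Nodup := by
    intro p hp
    rw [hs2mem] at hp
    obtain ⟨h0, ⟨hd1, hd2⟩, hz1, hz2⟩ := hp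
    have f1 : p.1 ≠ -p.1 := neg_ne_self_lat hz1
    have f2 : p.2 ≠ -p.2 := neg_ne_self_lat hz2
    have f1' : -p.1 ≠ p.1 := fun h => f1 h.symm
    have f2' : -p.2 ≠ p.2 := fun h => f2 h.symm
    have e1 : p.1 ≠ p.2 := fun h => hd1 h.symm
    have e2 : p.1 ≠ -p.2 := fun h => hd2 (by rw [h, neg_neg])
    have e3 : -p.1 ≠ p.2 := fun h => e2 (by rw [← h, neg_neg])
    have e4 : -p.2 ≠ p.1 := fun h => e2 h.symm
    have e5 : -p.1 ≠ -p.2 := fun h => e1 (neg_injective h)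
    have e6 : -p.2 ≠ -p.1 := fun h => hd1 (neg_injective h)
    have e1' : p.2 ≠ p.1 := hd1
    have e7 : p.2 ≠ -p.1 := hd2
    have e5' : -p.2 ≠ -p.1 := e6
    have e3' : -p.1 ≠ p.2 := e3
    simp only [hL8, List.map_cons, List.map_nil, pmapAux, cond_true, cond_false,
      List.nodup_cons, List.mem_cons, List.not_mem_nil, or_false, List.nodup_nil,
      and_true, Prod.mk.injEq, not_or,
      f1, f1', f2, f2', e1, e1', e2, e3, e4, e5, e6, e7,
      false_and, and_false, not_false_iff, and_self, true_and]
  -- orbit decomposition on s2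
  obtain ⟨T2, hT2sub, hT2sum⟩ := orbit_sum L8 hidL8 hinvL8 hcompL8
    (fun p => (n : ℝ) ^ 2 * latSummand Λ p) s2 hs2nd hs2cl
    (fun p _ g hg => by
      obtain ⟨b1, b2, bs, rfl⟩ := hL8form g hg
      simp only [latSummand_pmap])
  have hT2len : ((L8.length : ℕ) : ℝ) = 8 := by rw [hL8]; norm_num
  set M : ℤ := ∑ p ∈ T2, ((n : ℤ) * (cZ p) ^ 2 - 4 * aZ p.1 * aZ p.2) with hMdef
  have h8 : ∀ p : Λ × Λ, 8 * ((n : ℝ) ^ 2 * latSummand Λ p)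
      = (((2 * (n : ℤ) * ((n : ℤ) * (cZ p) ^ 2 - 4 * aZ p.1 * aZ p.2)) : ℤ) : ℝ) := by
    intro p
    have hk := hkey p
    push_cast
    linarith
  have hs2sum : ∑ p ∈ s2, (n : ℝ) ^ 2 * latSummand Λ p = 2 * (n : ℝ) * ((M : ℤ) : ℝ) := by
    rw [hT2sum, hT2len, Finset.mul_sum]
    rw [Finset.sum_congr rfl (fun p _ => h8 p)]
    rw [hMdef]
    push_cast
    rw [Finset.mul_sum]
  -- total
  have hZsum : ∑ p ∈ sZ, (n : ℝ) ^ 2 * latSummand Λ p = 0 := Finset.sum_eq_zero hZzero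
  have hRsplit : ∑ p ∈ sR, (n : ℝ) ^ 2 * latSummand Λ p
      = ∑ p ∈ sZ, (n : ℝ) ^ 2 * latSummand Λ p + ∑ p ∈ s2, (n : ℝ) ^ 2 * latSummand Λ p := by
    rw [hsZdef, hs2def]
    exact (Finset.sum_filter_add_sum_filter_not sR _ _).symm
  have hsplit : ∑ p ∈ s0, (n : ℝ) ^ 2 * latSummand Λ p
      = ∑ p ∈ sD, (n : ℝ) ^ 2 * latSummand Λ p + ∑ p ∈ sR, (n : ℝ) ^ 2 * latSummand Λ p := by
    rw [hsDdef, hsRdef]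
    exact (Finset.sum_filter_add_sum_filter_not s0 _ _).symm
  have htotal : (n : ℝ) ^ 2 * ∑ p ∈ s0, latSummand Λ p
      = 4 * ((n : ℝ) * ((n : ℝ) - 1) * ((K : ℤ) : ℝ)) + 2 * (n : ℝ) * ((M : ℤ) : ℝ) := by
    rw [Finset.mul_sum, hsplit, hRsplit, hZsum, hsDsum, hs2sum]
    ring
  have hfin : (∑ᶠ p ∈ S, latSummand Λ p) = ∑ p ∈ s0, latSummand Λ p :=
    finsum_mem_eq_finite_toFinset_sum _ hSfin
  constructor
  · refine ⟨2 * ((n : ℤ) - 1) * K + M, ?_⟩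
    show (n : ℝ) ^ 2 * ∑ᶠ p ∈ S, latSummand Λ p
      = 2 * (n : ℝ) * ((2 * ((n : ℤ) - 1) * K + M : ℤ) : ℝ)
    rw [hfin, htotal]
    have h1 : ((n : ℤ) : ℝ) = (n : ℝ) := by push_cast; rfl
    push_cast
    ring
  · intro hev
    have h2n : (2 : ℤ) ∣ (n : ℤ) := by
      obtain ⟨k, hk⟩ := hev
      exact ⟨k, by exact_mod_cast (by omega : n = 2 * k)⟩
    have h2M : (2 : ℤ) ∣ M := by
      rw [hMdef]
      refine Finset.dvd_sum fun p _ => ?_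
      exact dvd_sub (h2n.mul_right _) ⟨2 * (aZ p.1 * aZ p.2), by ring⟩
    obtain ⟨M', hM'⟩ := h2M
    refine ⟨((n : ℤ) - 1) * K + M', ?_⟩
    show (n : ℝ) ^ 2 * ∑ᶠ p ∈ S, latSummand Λ p
      = 4 * (n : ℝ) * ((((n : ℤ) - 1) * K + M' : ℤ) : ℝ)
    rw [hfin, htotal, hM']
    push_cast
    ring
end
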